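/- Generalized Gårding inequality (abstract form): let H be a Hilbert space, B : H × H → R a bounded symmetric bilinear form, Ξ : H → H a Banach-space isomorphism, and suppose there exist a constant C > 0 and a compact bilinear form K such that |B(Ξ a, a) + K(a,a)| ≥ C‖a‖² for all a ∈ H. Then the bounded operator T : H → H' induced by B is Fredholm of index 0. -/

import Mathlib

/-!
Since `|B(Ξa, a) + K(a, a)| ≥ C‖a‖²`, the form `W = B ∘ Ξ + K` is bounded below as a map
`H → H'`, and a functional annihilating its range would give `W(c, c) = 0`; so `W` is an
isomorphism (a Lax–Milgram argument). Then `B ∘ Ξ = W - K = W ∘ (1 - W⁻¹ K)` is an isomorphism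
composed with a compact perturbation of the identity, hence has finite-dimensional kernel and
closed range. By symmetry of `B` its Riesz representative is self-adjoint, so the cokernel of
`B` is the orthogonal complement of its closed range, which is its kernel.
-/

noncomputable section

/-- `T` (mapping a Hilbert space to its dual) is Fredholm of index `0`:
finite-dimensional kernel, closed range, finite-dimensional cokernel, and
`dim ker = dim coker`. -/
def FredholmIndexZero {H : Type*} [NormedAddCommGroup H] [InnerProductSpace ℝ H]
    [CompleteSpace H] (T : H →L[ℝ] (H →L[ℝ] ℝ)) : Prop :=
  FiniteDimensional ℝ (LinearMap.ker (T : H →ₗ[ℝ] (H →L[ℝ] ℝ))) ∧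
  IsClosed (Set.range T) ∧
  FiniteDimensional ℝ ((H →L[ℝ] ℝ) ⧸ LinearMap.range (T : H →ₗ[ℝ] (H →L[ℝ] ℝ))) ∧
  Module.finrank ℝ (LinearMap.ker (T : H →ₗ[ℝ] (H →L[ℝ] ℝ)))
    = Module.finrank ℝ ((H →L[ℝ] ℝ) ⧸ LinearMap.range (T : H →ₗ[ℝ] (H →L[ℝ] ℝ)))

open Filter Topology InnerProductSpace

namespace IsCompactOperator

section NontriviallyNormedField

variable {𝕜 E : Type*} [NontriviallyNormedField 𝕜] [CompleteSpace 𝕜]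
  [NormedAddCommGroup E] [NormedSpace 𝕜 E]

theorem finiteDimensional_ker_one_sub {D : E →L[𝕜] E} (hD : IsCompactOperator D) :
    FiniteDimensional 𝕜 (1 - D).ker := by
  have hfix : ∀ v ∈ (1 - D).ker, D v = v := fun v hv =>
    (sub_eq_zero.mp (by simpa using hv)).symm
  have hDN : ∀ v ∈ (1 - D).ker, (D : E →ₗ[𝕜] E) v ∈ (1 - D).ker := fun v hv =>
    (hfix v hv).symm ▸ hv
  have hrestrict : ((D : E →ₗ[𝕜] E).restrict hDN : (1 - D).ker → (1 - D).ker) = id :=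
    funext fun v => Subtype.ext (hfix v v.2)
  refine FiniteDimensional.of_isCompactOperator_id ?_
  rw [← hrestrict]
  exact hD.restrict hDN (ContinuousLinearMap.isClosed_ker _)

end NontriviallyNormedField

variable {E : Type*} [NormedAddCommGroup E] [NormedSpace ℝ E] {D : E →L[ℝ] E}

theorem exists_pos_mul_norm_le_of_disjoint_ker (hD : IsCompactOperator D) {M : Submodule ℝ E}
    (hM : IsClosed (M : Set E)) (hMD : Disjoint M (1 - D).ker) :
    ∃ c > 0, ∀ x ∈ M, c * ‖x‖ ≤ ‖(1 - D) x‖ := by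
  -- Otherwise unit vectors `u n ∈ M` with `(1 - D) (u n) → 0` converge along a subsequence on
  -- which `D (u n)` converges, and the limit is a unit vector of `M ⊓ ker (1 - D)`.
  by_contra! hsmall
  have hunit : ∀ n : ℕ, ∃ u ∈ M, ‖u‖ = 1 ∧ ‖(1 - D) u‖ < 1 / (n + 1) := by
    intro n
    obtain ⟨x, hxM, hx⟩ := hsmall (1 / (n + 1)) (by positivity)
    have hx0 : x ≠ 0 := by rintro rfl; simp at hx
    refine ⟨‖x‖⁻¹ • x, M.smul_mem _ hxM, norm_smul_inv_norm hx0, ?_⟩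
    rw [map_smul, norm_smul, norm_inv, norm_norm, inv_mul_lt_iff₀ (norm_pos_iff.mpr hx0)]
    linarith
  choose u huM hu1 hlim using hunit
  obtain ⟨S, hS, hDS⟩ := hD.image_closedBall_subset_compact 1
  obtain ⟨y, -, φ, hφ, hDu⟩ := hS.tendsto_subseq fun n =>
    hDS ⟨u n, by simp [(hu1 n).le], rfl⟩
  have hTu : Tendsto (fun n => (1 - D) (u (φ n))) atTop (𝓝 0) := by
    refine squeeze_zero_norm (fun n => (hlim (φ n)).le) ?_
    exact tendsto_one_div_add_atTop_nhds_zero_nat.comp hφ.tendsto_atTop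
  have hu : Tendsto (fun n => u (φ n)) atTop (𝓝 y) := by
    simpa using hTu.add hDu
  have hyM : y ∈ M := hM.mem_of_tendsto hu (Eventually.of_forall fun n => huM (φ n))
  have hyker : y ∈ (1 - D).ker :=
    tendsto_nhds_unique (((1 - D).continuous.tendsto y).comp hu) hTu
  have hy1 : ‖y‖ = 1 := tendsto_nhds_unique (hu.norm) (by simp [hu1])
  simp [Submodule.disjoint_def.mp hMD y hyM hyker] at hy1

theorem isClosed_range_one_sub [CompleteSpace E] (hD : IsCompactOperator D) :
    IsClosed (Set.range (1 - D : E →L[ℝ] E)) := by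
  have := hD.finiteDimensional_ker_one_sub
  obtain ⟨M, hM, hcompl⟩ :=
    (Submodule.ClosedComplemented.of_finiteDimensional (1 - D).ker).exists_isClosed_isCompl
  have hrange : Set.range (1 - D : E →L[ℝ] E) = Set.range ((1 - D) ∘L M.subtypeL) := by
    refine (Set.range_comp_subset_range _ _).antisymm' ?_
    rintro _ ⟨x, rfl⟩
    obtain ⟨n, m, hn, hm, rfl⟩ := Submodule.codisjoint_iff_exists_add_eq.mp hcompl.codisjoint x
    have hn : (1 - D) n = 0 := hn
    exact ⟨⟨m, hm⟩, by rw [map_add, hn, zero_add]; rfl⟩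
  obtain ⟨c, hc, hbound⟩ := hD.exists_pos_mul_norm_le_of_disjoint_ker hM hcompl.symm.disjoint
  have : CompleteSpace M := hM.completeSpace_coe
  rw [hrange]
  obtain ⟨K, hK⟩ := antilipschitzWith_iff_exists_mul_le_norm (f := (1 - D) ∘L M.subtypeL) |>.mpr
    ⟨c, hc, fun x => hbound x x.2⟩
  exact hK.isClosed_range (ContinuousLinearMap.uniformContinuous _)

end IsCompactOperator

namespace ContinuousLinearMap

section NontriviallyNormedField

variable {𝕜 E F G : Type*} [NontriviallyNormedField 𝕜]
  [NormedAddCommGroup E] [NormedSpace 𝕜 E] [NormedAddCommGroup F] [NormedSpace 𝕜 F]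
  [NormedAddCommGroup G] [NormedSpace 𝕜 G]
  {T : E →L[𝕜] F} {Ξ : G ≃L[𝕜] E} {e : G ≃L[𝕜] F} {K : G →L[𝕜] F}

theorem eq_comp_one_sub_comp_of_comp_eq_sub (hT : T ∘L (Ξ : G →L[𝕜] E) = e - K) :
    T = (e : G →L[𝕜] F) ∘L (1 - (e.symm : F →L[𝕜] G) ∘L K) ∘L (Ξ.symm : E →L[𝕜] G) := by
  ext x
  simpa using congr($hT (Ξ.symm x))

theorem finiteDimensional_ker_of_comp_eq_sub [CompleteSpace 𝕜] (hK : IsCompactOperator K)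
    (hT : T ∘L (Ξ : G →L[𝕜] E) = e - K) : FiniteDimensional 𝕜 T.ker := by
  have hD : IsCompactOperator ((e.symm : F →L[𝕜] G) ∘L K) := hK.clm_comp (e.symm : F →L[𝕜] G)
  have := hD.finiteDimensional_ker_one_sub
  have hker : T.ker = (1 - (e.symm : F →L[𝕜] G) ∘L K).ker.map (Ξ : G →ₗ[𝕜] E) := by
    rw [eq_comp_one_sub_comp_of_comp_eq_sub hT]
    ext x
    simp [Submodule.mem_map_equiv, sub_eq_zero, ContinuousLinearEquiv.eq_symm_apply]
  rw [hker]
  infer_instance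

end NontriviallyNormedField

section Real

variable {E F G : Type*} [NormedAddCommGroup E] [NormedSpace ℝ E] [NormedAddCommGroup F]
  [NormedSpace ℝ F] [NormedAddCommGroup G] [NormedSpace ℝ G] [CompleteSpace G]
  {T : E →L[ℝ] F} {Ξ : G ≃L[ℝ] E} {e : G ≃L[ℝ] F} {K : G →L[ℝ] F}

theorem isClosed_range_of_comp_eq_sub (hK : IsCompactOperator K)
    (hT : T ∘L (Ξ : G →L[ℝ] E) = e - K) : IsClosed (Set.range T) := by
  have hD : IsCompactOperator ((e.symm : F →L[ℝ] G) ∘L K) := hK.clm_comp (e.symm : F →L[ℝ] G)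
  have hrange : Set.range T = e '' Set.range (1 - (e.symm : F →L[ℝ] G) ∘L K : G →L[ℝ] G) := by
    rw [eq_comp_one_sub_comp_of_comp_eq_sub hT]
    simp only [coe_comp, ContinuousLinearEquiv.coe_coe, Set.range_comp, EquivLike.range_eq_univ,
      Set.image_univ]
  rw [hrange]
  exact e.toHomeomorph.isClosedMap _ hD.isClosed_range_one_sub

theorem mul_norm_le_norm_apply_of_le_abs {W : E →L[ℝ] E →L[ℝ] ℝ} {C : ℝ}
    (hW : ∀ a, C * ‖a‖ ^ 2 ≤ |W a a|) (a : E) : C * ‖a‖ ≤ ‖W a‖ := by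
  rcases (norm_nonneg a).eq_or_lt with ha | ha
  · simp [← ha]
  refine le_of_mul_le_mul_right ?_ ha
  calc C * ‖a‖ * ‖a‖ = C * ‖a‖ ^ 2 := by ring
    _ ≤ ‖W a a‖ := hW a
    _ ≤ ‖W a‖ * ‖a‖ := (W a).le_opNorm a

end Real

end ContinuousLinearMap

section Hilbert

variable {H : Type*} [NormedAddCommGroup H] [InnerProductSpace ℝ H] [CompleteSpace H]

theorem toDual_continuousLinearMapOfBilin (B : H →L[ℝ] H →L[ℝ] ℝ) (a : H) :
    toDual ℝ H (continuousLinearMapOfBilin B a) = B a :=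
  (toDual ℝ H).apply_symm_apply (B a)

theorem isClosed_range_continuousLinearMapOfBilin {B : H →L[ℝ] H →L[ℝ] ℝ}
    (hB : IsClosed (Set.range B)) : IsClosed (Set.range (continuousLinearMapOfBilin B)) := by
  have : Set.range (continuousLinearMapOfBilin B) = (toDual ℝ H).symm '' Set.range B := by
    ext; simp [continuousLinearMapOfBilin]
  rw [this]
  exact (toDual ℝ H).symm.toHomeomorph.isClosedMap _ hB

theorem ContinuousLinearMap.bijective_of_le_abs_apply_self {W : H →L[ℝ] H →L[ℝ] ℝ} {C : ℝ}
    (hC : 0 < C) (hW : ∀ a, C * ‖a‖ ^ 2 ≤ |W a a|) : Function.Bijective W := by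
  obtain ⟨K, hK⟩ := antilipschitzWith_iff_exists_mul_le_norm.mpr
    ⟨C, hC, W.mul_norm_le_norm_apply_of_le_abs hW⟩
  refine ⟨hK.injective, fun φ => ?_⟩
  set S := continuousLinearMapOfBilin W
  have hrange := isClosed_range_continuousLinearMapOfBilin (hK.isClosed_range W.uniformContinuous)
  have : CompleteSpace S.range := hrange.completeSpace_coe
  have hS : S.range = ⊤ := by
    rw [← Submodule.orthogonal_eq_bot_iff, Submodule.eq_bot_iff]
    intro c hcperp
    have hWc : W c c = 0 :=
      (continuousLinearMapOfBilin_apply W c c).symm.trans (hcperp _ ⟨c, rfl⟩)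
    have hc : ‖c‖ ^ 2 ≤ 0 := nonpos_of_mul_nonpos_right (by simpa [hWc] using hW c) hC
    simpa using hc
  obtain ⟨a, ha⟩ := LinearMap.range_eq_top.mp hS ((toDual ℝ H).symm φ)
  exact ⟨a, by rw [← toDual_continuousLinearMapOfBilin]; simpa using congrArg (toDual ℝ H) ha⟩

theorem isSymmetric_continuousLinearMapOfBilin {B : H →L[ℝ] H →L[ℝ] ℝ}
    (hB : ∀ a c, B a c = B c a) : (continuousLinearMapOfBilin B : H →ₗ[ℝ] H).IsSymmetric :=
  fun a c => by
    simp only [ContinuousLinearMap.coe_coe]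
    rw [continuousLinearMapOfBilin_apply, real_inner_comm, continuousLinearMapOfBilin_apply, hB]

theorem ker_continuousLinearMapOfBilin (B : H →L[ℝ] H →L[ℝ] ℝ) :
    (continuousLinearMapOfBilin B).ker = LinearMap.ker (B : H →ₗ[ℝ] H →L[ℝ] ℝ) := by
  ext a
  simp [← toDual_continuousLinearMapOfBilin B a]

theorem FredholmIndexZero.of_symm {T : H →L[ℝ] H →L[ℝ] ℝ} (hsymm : ∀ a c, T a c = T c a)
    [FiniteDimensional ℝ (LinearMap.ker (T : H →ₗ[ℝ] H →L[ℝ] ℝ))] (hT : IsClosed (Set.range T)) :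
    FredholmIndexZero T := by
  set S := continuousLinearMapOfBilin T
  have : CompleteSpace S.range := (isClosed_range_continuousLinearMapOfBilin hT).completeSpace_coe
  let J : (H →L[ℝ] ℝ) ≃ₗ[ℝ] H := (toDual ℝ H).symm.toLinearEquiv
  have hmap : (LinearMap.range (T : H →ₗ[ℝ] H →L[ℝ] ℝ)).map (J : (H →L[ℝ] ℝ) →ₗ[ℝ] H) =
      S.range := by
    rw [← LinearMap.range_comp]
    rfl
  have hperp : S.rangeᗮ = LinearMap.ker (T : H →ₗ[ℝ] H →L[ℝ] ℝ) :=
    (isSymmetric_continuousLinearMapOfBilin hsymm).orthogonal_range.trans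
      (ker_continuousLinearMapOfBilin T)
  let e := (Submodule.Quotient.equiv _ _ J hmap).trans <|
    (Submodule.quotientEquivOfIsCompl _ _ (Submodule.isCompl_orthogonal _)).trans
      (LinearEquiv.ofEq _ _ hperp)
  exact ⟨‹_›, hT, Module.Finite.equiv e.symm, e.finrank_eq.symm⟩

end Hilbert

/-- Generalized Gårding (T-coercivity) inequality implies Fredholm of
index zero: `B : H × H → ℝ` a bounded symmetric bilinear form, `Ξ : H ≃ H` an
isomorphism, `K` a compact bilinear form, and `|B(Ξa, a) + K(a,a)| ≥ C‖a‖²` for some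
`C > 0`.  Then the operator `T : H → H'`, `(Ta)(c) = B(a,c)`, is Fredholm of index `0`. -/
theorem garding_implies_fredholm_index_zero
    {H : Type*} [NormedAddCommGroup H] [InnerProductSpace ℝ H] [CompleteSpace H]
    (B : H →L[ℝ] (H →L[ℝ] ℝ))
    (hsymm : ∀ a c : H, B a c = B c a)
    (Ξ : H ≃L[ℝ] H)
    (K : H →L[ℝ] (H →L[ℝ] ℝ)) (hK : IsCompactOperator (K : H → (H →L[ℝ] ℝ)))
    (C : ℝ) (hC : 0 < C)
    (hcoercive : ∀ a : H, C * ‖a‖ ^ 2 ≤ |B (Ξ a) a + K a a|) :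
    FredholmIndexZero B := by
  set W := B ∘L (Ξ : H →L[ℝ] H) + K
  have hW : Function.Bijective W := W.bijective_of_le_abs_apply_self hC hcoercive
  let e := ContinuousLinearEquiv.ofBijective W (LinearMap.ker_eq_bot.mpr hW.1)
    (LinearMap.range_eq_top.mpr hW.2)
  have hBΞ : B ∘L (Ξ : H →L[ℝ] H) = e - K := by
    ext
    simp [e, W]
  have := ContinuousLinearMap.finiteDimensional_ker_of_comp_eq_sub hK hBΞ
  exact .of_symm hsymm (ContinuousLinearMap.isClosed_range_of_comp_eq_sub hK hBΞ)
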